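/- arXiv:1403.1369 — 3 statements merged into one kernel-verified Lean document; each statement's English description precedes it below -/
import Mathlib

section
/- For any integer n ≠ 0 and any integer l, the sum over k ≠ n of ⟨k−n⟩² / (⟨k+l⟩² |n−k|²) is at most 32/5, where ⟨x⟩ = 1 + |x|. -/
open Real

noncomputable def gg (j : ℤ) : ℝ := ((1 + |(j : ℝ)|) ^ 2)⁻¹

lemma gg_nonneg (j : ℤ) : 0 ≤ gg j := by unfold gg; positivity

lemma gg_le (j : ℤ) (t : ℕ) (h : (t : ℤ) ≤ |j|) : gg j ≤ ((1 + (t : ℝ)) ^ 2)⁻¹ := by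
  unfold gg
  have h' : (t : ℝ) ≤ |(j : ℝ)| := by
    rw [← Int.cast_abs]; exact_mod_cast h
  have h0 : (0:ℝ) < 1 + (t:ℝ) := by positivity
  apply inv_anti₀ (by positivity)
  nlinarith

lemma gg_le_one (j : ℤ) : gg j ≤ 1 := by
  simpa using gg_le j 0 (abs_nonneg j)

lemma gg_le_quarter (j : ℤ) (h : j ≠ 0) : gg j ≤ 1/4 := by
  have := gg_le j 1 (by simpa using Int.one_le_abs h)
  norm_num at this ⊢; linarith

lemma gg_nat (n : ℕ) : gg n = ((1 + (n:ℝ))^2)⁻¹ := by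
  unfold gg; norm_num
lemma gg_neg (j : ℤ) : gg (-j) = gg j := by unfold gg; simp

noncomputable def FF (n : ℕ) : ℝ := ((1 + (n : ℝ)) ^ 2)⁻¹

lemma summable_FF : Summable FF := by
  have h : Summable fun n : ℕ => 1 / (n : ℝ) ^ 2 :=
    Real.summable_one_div_nat_pow.mpr one_lt_two
  have h2 := (summable_nat_add_iff 1).mpr h
  refine h2.congr fun n => ?_
  unfold FF
  push_cast
  rw [one_div]
  ring_nf

lemma tel_sum (N : ℕ) : ∑ i ∈ Finset.range N, (((i:ℝ)+5) * ((i:ℝ)+6))⁻¹ ≤ 1/5 := by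
  have key : ∀ i : ℕ, (((i:ℝ)+5) * ((i:ℝ)+6))⁻¹ = ((i:ℝ)+5)⁻¹ - (((i+1:ℕ):ℝ)+5)⁻¹ := by
    intro i
    push_cast
    rw [inv_sub_inv (by positivity) (by positivity)]
    rw [div_eq_inv_mul]
    norm_num
    ring_nf
    tauto
  calc ∑ i ∈ Finset.range N, (((i:ℝ)+5) * ((i:ℝ)+6))⁻¹
      = ∑ i ∈ Finset.range N, (((i:ℝ)+5)⁻¹ - (((i+1:ℕ):ℝ)+5)⁻¹) := by
        exact Finset.sum_congr rfl fun i _ => key i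
    _ = (((0:ℕ):ℝ)+5)⁻¹ - ((N:ℝ)+5)⁻¹ :=
        Finset.sum_range_sub' (fun i : ℕ => ((i:ℝ)+5)⁻¹) N
    _ ≤ 1/5 := by
        have : (0:ℝ) ≤ ((N:ℝ)+5)⁻¹ := by positivity
        norm_num
        linarith

lemma tail_le {f : ℕ → ℝ} (hnn : ∀ i, 0 ≤ f i) (hb : ∀ i, f i ≤ (((i:ℝ)+5) * ((i:ℝ)+6))⁻¹) :
    ∑' i, f i ≤ 1/5 := by
  apply tsum_le_of_sum_le'
  · norm_num
  · intro s
    calc ∑ i ∈ s, f i ≤ ∑ i ∈ Finset.range (s.sup id + 1), f i := by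
          apply Finset.sum_le_sum_of_subset_of_nonneg
          · intro x hx
            simp only [Finset.mem_range]
            exact Nat.lt_succ_of_le (Finset.le_sup (f := id) hx)
          · intro i _ _; exact hnn i
      _ ≤ ∑ i ∈ Finset.range (s.sup id + 1), (((i:ℝ)+5) * ((i:ℝ)+6))⁻¹ :=
          Finset.sum_le_sum fun i _ => hb i
      _ ≤ 1/5 := tel_sum _

lemma FF_tail_bound (k : ℕ) (hk : 5 ≤ k) :
    ∀ i : ℕ, FF (i + k) ≤ (((i:ℝ)+5) * ((i:ℝ)+6))⁻¹ := by
  intro i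
  unfold FF
  apply inv_anti₀ (by positivity)
  have : (5:ℝ) ≤ (k:ℝ) := by exact_mod_cast hk
  have h0 : (0:ℝ) ≤ (i:ℝ) := by positivity
  push_cast
  nlinarith

lemma summable_gg : Summable gg := by
  refine Summable.of_nat_of_neg_add_one (summable_FF.congr fun n => ?_)
    (((summable_nat_add_iff 1).mpr summable_FF).congr fun n => ?_)
  · rw [gg_nat]; rfl
  · rw [show (-(n+1) : ℤ) = -((n+1 : ℕ) : ℤ) by push_cast; ring, gg_neg, gg_nat]
    rfl

lemma tsum_FF_le : ∑' n, FF n ≤ 5989/3600 := by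
  rw [← Summable.sum_add_tsum_nat_add 5 summable_FF]
  have h1 : ∑ i ∈ Finset.range 5, FF i = 1 + 1/4 + 1/9 + 1/16 + 1/25 := by
    simp [Finset.sum_range_succ, FF]
    norm_num
  have h2 : ∑' i, FF (i + 5) ≤ 1/5 :=
    tail_le (fun i => by unfold FF; positivity) (FF_tail_bound 5 le_rfl)
  rw [h1]
  norm_num
  linarith

lemma tsum_FF_shift_le : ∑' n, FF (n + 1) ≤ 2389/3600 := by
  rw [← Summable.sum_add_tsum_nat_add 4 ((summable_nat_add_iff 1).mpr summable_FF)]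
  have h1 : ∑ i ∈ Finset.range 4, FF (i + 1) = 1/4 + 1/9 + 1/16 + 1/25 := by
    simp [Finset.sum_range_succ, FF]
    norm_num
  have h2 : ∑' i, FF (i + 4 + 1) ≤ 1/5 := by
    refine tail_le (fun i => by unfold FF; positivity) (fun i => ?_)
    have := FF_tail_bound 5 le_rfl i
    rwa [show i + 4 + 1 = i + 5 by ring]
  rw [h1]
  norm_num
  linarith

lemma tsum_gg_le : ∑' j : ℤ, gg j ≤ 4189/1800 := by
  rw [tsum_of_nat_of_neg_add_one (summable_FF.congr fun n => by rw [gg_nat]; rfl)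
    (((summable_nat_add_iff 1).mpr summable_FF).congr fun n => by
      rw [show (-(n+1) : ℤ) = -((n+1 : ℕ) : ℤ) by push_cast; ring, gg_neg, gg_nat]; rfl)]
  have e1 : ∑' n : ℕ, gg n = ∑' n, FF n := tsum_congr fun n => by rw [gg_nat]; rfl
  have e2 : ∑' n : ℕ, gg (-(n+1)) = ∑' n, FF (n+1) := tsum_congr fun n => by
    rw [show (-(n+1) : ℤ) = -((n+1 : ℕ) : ℤ) by push_cast; ring, gg_neg, gg_nat]; rfl
  rw [e1, e2]
  have := tsum_FF_le
  have := tsum_FF_shift_le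
  norm_num
  linarith

noncomputable def DD (c : ℤ) (m : ℤ) : ℝ :=
  if m = 0 then -(16/9) * gg c
  else if m = 1 ∨ m = -1 then (20/9) * gg (m + c)
  else if m = 2 ∨ m = -2 then (17/36) * gg (m + c)
  else 0

lemma DD_vanish (c : ℤ) : ∀ m ∉ ({0, 1, -1, 2, -2} : Finset ℤ), DD c m = 0 := by
  intro m hm
  simp only [Finset.mem_insert, Finset.mem_singleton, not_or] at hm
  obtain ⟨h0, h1, h2, h3, h4⟩ := hm
  simp [DD, h0, h1, h2, h3, h4]

lemma summable_DD (c : ℤ) : Summable (DD c) :=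
  summable_of_ne_finset_zero (DD_vanish c)

lemma summable_ggc (c : ℤ) : Summable (fun m : ℤ => gg (m + c)) :=
  ((Equiv.addRight c).summable_iff (f := gg)).mpr summable_gg

lemma coeff_bound (m : ℤ) (h0 : m ≠ 0) (h1 : m ≠ 1) (h2 : m ≠ -1) (h3 : m ≠ 2) (h4 : m ≠ -2) :
    (1 + |(m:ℝ)|)^2 / (m:ℝ)^2 ≤ 16/9 := by
  have h3' : (3:ℤ) ≤ |m| := by rw [Int.abs_eq_natAbs]; omega
  have hr : (3:ℝ) ≤ |(m:ℝ)| := by rw [← Int.cast_abs]; exact_mod_cast h3'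
  have hm2 : (0:ℝ) < (m:ℝ)^2 := by
    have : (m:ℝ) ≠ 0 := Int.cast_ne_zero.mpr h0
    positivity
  rw [div_le_iff₀ hm2, ← sq_abs (m:ℝ)]
  nlinarith

lemma coeff_le_four (m : ℤ) (h0 : m ≠ 0) : (1 + |(m:ℝ)|)^2 / (m:ℝ)^2 ≤ 4 := by
  have h1' : (1:ℤ) ≤ |m| := by rw [Int.abs_eq_natAbs]; omega
  have hr : (1:ℝ) ≤ |(m:ℝ)| := by rw [← Int.cast_abs]; exact_mod_cast h1'
  have hm2 : (0:ℝ) < (m:ℝ)^2 := by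
    have : (m:ℝ) ≠ 0 := Int.cast_ne_zero.mpr h0
    positivity
  rw [div_le_iff₀ hm2, ← sq_abs (m:ℝ)]
  nlinarith

lemma pointwise (c : ℤ) (m : ℤ) :
    (if m = 0 then (0:ℝ) else ((1 + |(m:ℝ)|)^2 / (m:ℝ)^2) * gg (m + c))
      ≤ 16/9 * gg (m + c) + DD c m := by
  by_cases h0 : m = 0
  · subst h0
    simp [DD, gg_nonneg]
  by_cases h1 : m = 1
  · subst h1
    have : (1 + |((1:ℤ):ℝ)|)^2 / ((1:ℤ):ℝ)^2 = 4 := by norm_num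
    simp only [DD, if_neg h0, h0]
    norm_num [this]
    linarith [gg_nonneg (1 + c)]
  by_cases h2 : m = -1
  · subst h2
    have : (1 + |((-1:ℤ):ℝ)|)^2 / ((-1:ℤ):ℝ)^2 = 4 := by norm_num
    simp only [DD, if_neg h0]
    norm_num [this]
    linarith [gg_nonneg (-1 + c)]
  by_cases h3 : m = 2
  · subst h3
    have : (1 + |((2:ℤ):ℝ)|)^2 / ((2:ℤ):ℝ)^2 = 9/4 := by norm_num
    simp only [DD, if_neg h0]
    norm_num [this]
    linarith [gg_nonneg (2 + c)]
  by_cases h4 : m = -2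
  · subst h4
    have : (1 + |((-2:ℤ):ℝ)|)^2 / ((-2:ℤ):ℝ)^2 = 9/4 := by norm_num
    simp only [DD, if_neg h0]
    norm_num [this]
    linarith [gg_nonneg (-2 + c)]
  · rw [if_neg h0]
    have hD : DD c m = 0 := by simp [DD, h0, h1, h2, h3, h4]
    rw [hD, add_zero]
    exact mul_le_mul_of_nonneg_right (coeff_bound m h0 h1 h2 h3 h4) (gg_nonneg _)

lemma summable_T (c : ℤ) :
    Summable (fun m : ℤ => if m = 0 then (0:ℝ) else ((1 + |(m:ℝ)|)^2 / (m:ℝ)^2) * gg (m + c)) := by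
  apply Summable.of_nonneg_of_le _ _ ((summable_ggc c).mul_left 4)
  · intro m
    by_cases h : m = 0
    · simp [h]
    · rw [if_neg h]
      have hnum : (0:ℝ) ≤ (1 + |(m:ℝ)|)^2 / (m:ℝ)^2 := by positivity
      exact mul_nonneg hnum (gg_nonneg _)
  · intro m
    by_cases h : m = 0
    · simp [h]
      linarith [gg_nonneg c]
    · rw [if_neg h]
      exact mul_le_mul_of_nonneg_right (coeff_le_four m h) (gg_nonneg _)

lemma gg0 : gg 0 = 1 := by unfold gg; norm_num
lemma gg1 : gg 1 = 1/4 := by unfold gg; norm_num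
lemma gg2 : gg 2 = 1/9 := by unfold gg; norm_num
lemma gg3 : gg 3 = 1/16 := by unfold gg; norm_num
lemma ggm1 : gg (-1) = 1/4 := by rw [show (-1:ℤ) = -(1:ℤ) from rfl, gg_neg, gg1]
lemma ggm2 : gg (-2) = 1/9 := by rw [show (-2:ℤ) = -(2:ℤ) from rfl, gg_neg, gg2]
lemma ggm3 : gg (-3) = 1/16 := by rw [show (-3:ℤ) = -(3:ℤ) from rfl, gg_neg, gg3]

lemma tsum_DD (c : ℤ) : ∑' m : ℤ, DD c m =
    -(16/9) * gg c + (20/9) * gg (1 + c) + (20/9) * gg (-1 + c)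
      + (17/36) * gg (2 + c) + (17/36) * gg (-2 + c) := by
  rw [tsum_eq_sum (DD_vanish c)]
  have h1 : ({0, 1, -1, 2, -2} : Finset ℤ) = {0, 1, -1, 2, -2} := rfl
  rw [show ({0, 1, -1, 2, -2} : Finset ℤ) =
    insert 0 (insert 1 (insert (-1) (insert 2 ({-2} : Finset ℤ)))) from rfl]
  rw [Finset.sum_insert (by decide), Finset.sum_insert (by decide),
    Finset.sum_insert (by decide), Finset.sum_insert (by decide), Finset.sum_singleton]
  simp only [DD]
  norm_num
  ring

lemma key (c : ℤ) :
    ∑' m : ℤ, (if m = 0 then (0:ℝ) else ((1 + |(m:ℝ)|)^2 / (m:ℝ)^2) * gg (m + c)) ≤ 32/5 := by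
  have hmaj : Summable (fun m : ℤ => 16/9 * gg (m + c) + DD c m) :=
    ((summable_ggc c).mul_left _).add (summable_DD c)
  have step1 := Summable.tsum_le_tsum (pointwise c) (summable_T c) hmaj
  rw [Summable.tsum_add ((summable_ggc c).mul_left _) (summable_DD c), tsum_mul_left] at step1
  have htrans : ∑' m : ℤ, gg (m + c) = ∑' j : ℤ, gg j :=
    (Equiv.addRight c).tsum_eq gg
  rw [htrans, tsum_DD c] at step1
  have hG := tsum_gg_le
  have hGnn : (0:ℝ) ≤ ∑' j : ℤ, gg j := tsum_nonneg gg_nonneg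
  refine step1.trans ?_
  by_cases hc1 : c = 1
  · subst hc1
    norm_num [gg0, gg1, gg2, gg3, ggm1]
    linarith
  by_cases hcm1 : c = -1
  · subst hcm1
    norm_num [gg0, gg1, ggm1, ggm2, ggm3]
    linarith
  · have b1 : gg (1 + c) ≤ 1/4 := gg_le_quarter _ (by omega)
    have b2 : gg (-1 + c) ≤ 1/4 := gg_le_quarter _ (by omega)
    have b3 : gg (2 + c) ≤ 1 := gg_le_one _
    have b4 : gg (-2 + c) ≤ 1 := gg_le_one _
    have b5 : 0 ≤ gg c := gg_nonneg c
    linarith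

theorem stmt_0 (n l : ℤ) (hn : n ≠ 0) :
    (∑' k : {k : ℤ // k ≠ n},
      (1 + |(k : ℝ) - n|)^2 / ((1 + |(k : ℝ) + l|)^2 * |(n : ℝ) - k|^2))
    ≤ 32 / 5 := by
  have main :=
    calc (∑' k : {k : ℤ // k ≠ n},
        (1 + |((k : ℤ) : ℝ) - n|)^2 / ((1 + |((k : ℤ) : ℝ) + l|)^2 * |(n : ℝ) - ((k : ℤ) : ℝ)|^2))
        = ∑' k : ℤ, Set.indicator {k : ℤ | k ≠ n}
            (fun k : ℤ => (1 + |(k : ℝ) - n|)^2 / ((1 + |(k : ℝ) + l|)^2 * |(n : ℝ) - k|^2)) k :=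
          tsum_subtype {k : ℤ | k ≠ n}
            (fun k : ℤ => (1 + |(k : ℝ) - n|)^2 / ((1 + |(k : ℝ) + l|)^2 * |(n : ℝ) - k|^2))
      _ = ∑' m : ℤ, Set.indicator {k : ℤ | k ≠ n}
            (fun k : ℤ => (1 + |(k : ℝ) - n|)^2 / ((1 + |(k : ℝ) + l|)^2 * |(n : ℝ) - k|^2))
            (m + n) :=
          ((Equiv.addRight n).tsum_eq _).symm
      _ = ∑' m : ℤ, (if m = 0 then (0:ℝ) else ((1 + |(m:ℝ)|)^2 / (m:ℝ)^2) * gg (m + (n + l))) := by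
          refine tsum_congr fun m => ?_
          by_cases hm : m = 0
          · subst hm
            simp
          · rw [if_neg hm, Set.indicator_of_mem (by simpa using hm : (m + n) ∈ {k : ℤ | k ≠ n})]
            unfold gg
            push_cast
            rw [show (m:ℝ) + n - n = (m:ℝ) by ring,
              show (n:ℝ) - ((m:ℝ) + n) = -(m:ℝ) by ring, abs_neg, sq_abs,
              show (m:ℝ) + (n + l) = (m:ℝ) + n + l by ring,
              div_mul_eq_div_div_swap, div_eq_mul_inv]
      _ ≤ 32/5 := key (n + l)
  exact main
end

section
/- For any integer n, the sum over all integers l ≠ n of 1/(⟨l+n⟩² |n−l|²) is at most (5/2)/⟨n⟩², where ⟨x⟩ = 1 + |x|. -/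
set_option maxHeartbeats 1000000
open Finset Real


lemma hs1 : HasSum (fun k : ℕ => 1/((k:ℝ)+1)^2) (π^2/6) := by
  have h := hasSum_zeta_two
  have h2 : HasSum (fun n : ℕ => 1/(((n+1:ℕ)):ℝ)^2) (π^2/6 - ∑ i ∈ range 1, 1/((i:ℕ):ℝ)^2) :=
    (hasSum_nat_add_iff' (f := fun n : ℕ => 1/((n:ℕ):ℝ)^2) 1).mpr h
  simp only [range_one, sum_singleton, Nat.cast_zero] at h2
  norm_num at h2
  exact h2.congr_fun (by intro k; push_cast; ring_nf)

lemma sb1 : Summable (fun k : ℕ => 1/((k:ℝ)+1)^2) := hs1.summable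

lemma partial_le (J : ℕ) : ∑ i ∈ range J, 1/((i:ℝ)+1)^2 ≤ π^2/6 := by
  rw [← hs1.tsum_eq]
  exact Summable.sum_le_tsum _ (fun i _ => by positivity) sb1

lemma tail_tsum (J : ℕ) : ∑' k : ℕ, 1/((k:ℝ)+(J:ℝ)+1)^2 = π^2/6 - ∑ i ∈ range J, 1/((i:ℝ)+1)^2 := by
  have h := Summable.sum_add_tsum_nat_add (f := fun k : ℕ => 1/((k:ℝ)+1)^2) J sb1
  rw [hs1.tsum_eq] at h
  have h2 : ∑' k : ℕ, 1/((k:ℝ)+(J:ℝ)+1)^2 = ∑' k : ℕ, 1/(((k+J:ℕ):ℝ)+1)^2 :=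
    tsum_congr (fun k => by push_cast; ring_nf)
  rw [h2]; linarith

lemma aux_bound (g : ℕ → ℝ) (K J : ℕ) (c : ℝ) (hc : 0 ≤ c) (h0 : ∀ k, 0 ≤ g k)
    (hle : ∀ k, g (k+K) ≤ c / (((k:ℝ)+(J:ℝ)+1)^2)) :
    Summable g ∧ ∑' k, g k ≤ ∑ i ∈ range K, g i + c * (π^2/6 - ∑ i ∈ range J, 1/((i:ℝ)+1)^2) := by
  have hmaj : Summable (fun k : ℕ => c / (((k:ℝ)+(J:ℝ)+1)^2)) := by
    have h1 : Summable (fun k : ℕ => 1/(((k+J:ℕ):ℝ)+1)^2) := (summable_nat_add_iff J).mpr sb1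
    exact (h1.mul_left c).congr (fun k => by push_cast; ring_nf)
  have htail : Summable (fun k => g (k+K)) :=
    Summable.of_nonneg_of_le (fun k => h0 _) hle hmaj
  have hg : Summable g := (summable_nat_add_iff K).mp htail
  refine ⟨hg, ?_⟩
  rw [← Summable.sum_add_tsum_nat_add K hg]
  have h2 : ∑' k, g (k+K) ≤ c * (π^2/6 - ∑ i ∈ range J, 1/((i:ℝ)+1)^2) := by
    calc ∑' k, g (k+K) ≤ ∑' k : ℕ, c / (((k:ℝ)+(J:ℝ)+1)^2) := Summable.tsum_le_tsum hle htail hmaj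
    _ = c * ∑' k : ℕ, 1 / (((k:ℝ)+(J:ℝ)+1)^2) := by
        rw [← tsum_mul_left]; exact tsum_congr fun k => by ring
    _ = _ := by rw [tail_tsum]
  linarith

lemma harmonic_sqrt : ∀ j : ℕ, 4 ≤ j → ∑ k ∈ range j, 1/((k:ℝ)+1) ≤ Real.sqrt ((j:ℝ)+1) := by
  intro j hj
  induction j with
  | zero => omega
  | succ j ih =>
    rcases Nat.lt_or_ge j 4 with h4 | h4
    · have hj3 : j = 3 := by omega
      subst hj3
      have hsum : ∑ k ∈ range 4, 1/((k:ℝ)+1) = 25/12 := by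
        simp [Finset.sum_range_succ]; norm_num
      push_cast
      rw [hsum, Real.le_sqrt (by norm_num) (by norm_num)]
      norm_num
    · have hrec := ih h4
      rw [Finset.sum_range_succ]
      have h4R : (4:ℝ) ≤ (j:ℝ) := by exact_mod_cast h4
      have hs5 : (2.2:ℝ) ≤ Real.sqrt ((j:ℝ)+1) := by
        rw [Real.le_sqrt (by norm_num) (by positivity)]
        nlinarith
      set s := Real.sqrt ((j:ℝ)+1) with hsdef
      have hs2 : s^2 = (j:ℝ)+1 := Real.sq_sqrt (by positivity)
      have hspos : (0:ℝ) < s := by linarith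
      have target : s + 1/((j:ℝ)+1) ≤ Real.sqrt ((j:ℝ)+1+1) := by
        rw [Real.le_sqrt (by positivity) (by positivity)]
        have hinv : 1/((j:ℝ)+1) = 1/s^2 := by rw [hs2]
        rw [hinv]
        have hexp : (s + 1/s^2)^2 = s^2 + 2/s + 1/s^4 := by field_simp; ring
        rw [hexp]
        have h1 : 2/s ≤ 2/2.2 := by apply div_le_div_of_nonneg_left <;> linarith
        have h2 : 1/s^4 ≤ 1/2.2^4 := by
          apply div_le_div_of_nonneg_left (by norm_num) (by norm_num)
          nlinarith
        nlinarith
      push_cast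
      linarith


section helpers

lemma bound_helper {u v c : ℝ} (hu : 0 < u) (hv : 0 < v) (h : v^2 ≤ c*u) : 1/u ≤ c/v^2 := by
  rw [div_le_div_iff₀ hu (by positivity)]
  linarith

end helpers

noncomputable def G1 (m : ℕ) (k : ℕ) : ℝ := 1 / ((1 + |2*(m:ℝ) - ((k:ℝ)+1)|)^2 * ((k:ℝ)+1)^2)
noncomputable def G2 (m : ℕ) (k : ℕ) : ℝ := 1 / ((1 + (2*(m:ℝ) + ((k:ℝ)+1)))^2 * ((k:ℝ)+1)^2)

lemma G1_abs_hi (m k : ℕ) (h : 2*m ≤ k) : G1 m k = 1/((((k:ℝ)+1) - 2*(m:ℝ) + 1)^2*(((k:ℝ)+1)^2)) := by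
  unfold G1
  have hR : 2*(m:ℝ) ≤ (k:ℝ) := by exact_mod_cast h
  rw [show 2*(m:ℝ) - ((k:ℝ)+1) = -(((k:ℝ)+1) - 2*(m:ℝ)) by ring, abs_neg,
     abs_of_nonneg (by linarith)]
  ring_nf

lemma G1_abs_lo (m k : ℕ) (h : k < 2*m) : G1 m k = 1/((((2*(m:ℝ)+1) - ((k:ℝ)+1))^2)*(((k:ℝ)+1)^2)) := by
  unfold G1
  have hR : (k:ℝ)+1 ≤ 2*(m:ℝ) := by exact_mod_cast h
  rw [abs_of_nonneg (by linarith)]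
  ring_nf

lemma G2_eq (m k : ℕ) : G2 m k = 1/((((2*(m:ℝ)+1) + ((k:ℝ)+1))^2)*(((k:ℝ)+1)^2)) := by
  unfold G2; ring_nf

lemma pf_identity (N j : ℝ) (hj : j ≠ 0) (ha : N - j ≠ 0) (hN : N ≠ 0) :
    1/((N - j)^2 * j^2) = (1/N^2)*(1/j^2) + (1/N^2)*(1/(N-j)^2) + (2/N^3)*(1/j) + (2/N^3)*(1/(N-j)) := by
  field_simp
  ring

lemma reflect2 (m : ℕ) (p : ℕ) :
    ∑ k ∈ range (2*m), 1/((2*(m:ℝ)+1) - ((k:ℝ)+1))^p = ∑ k ∈ range (2*m), 1/((k:ℝ)+1)^p := by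
  rw [← Finset.sum_range_reflect (fun j => 1/((j:ℝ)+1)^p) (2*m)]
  apply Finset.sum_congr rfl
  intro k hk
  rw [Finset.mem_range] at hk
  congr 2
  have h1 : k ≤ 2*m - 1 := by omega
  have h2 : 1 ≤ 2*m := by omega
  rw [Nat.cast_sub h1, Nat.cast_sub h2]
  push_cast
  ring

lemma reflect1 (m : ℕ) :
    ∑ k ∈ range (2*m), 1/((2*(m:ℝ)+1) - ((k:ℝ)+1)) = ∑ k ∈ range (2*m), 1/((k:ℝ)+1) := by
  have h := reflect2 m 1
  simpa using h

lemma head_eq (m : ℕ) (hm : 1 ≤ m) :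
    ∑ k ∈ range (2*m), G1 m k
      = (1/(2*(m:ℝ)+1)^2) * (∑ k ∈ range (2*m), 1/((k:ℝ)+1)^2)
      + (1/(2*(m:ℝ)+1)^2) * (∑ k ∈ range (2*m), 1/((k:ℝ)+1)^2)
      + (2/(2*(m:ℝ)+1)^3) * (∑ k ∈ range (2*m), 1/((k:ℝ)+1))
      + (2/(2*(m:ℝ)+1)^3) * (∑ k ∈ range (2*m), 1/((k:ℝ)+1)) := by
  have hN : (0:ℝ) < 2*(m:ℝ)+1 := by positivity
  have hpoint : ∀ k ∈ range (2*m), G1 m k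
      = (1/(2*(m:ℝ)+1)^2) * (1/((k:ℝ)+1)^2)
      + (1/(2*(m:ℝ)+1)^2) * (1/((2*(m:ℝ)+1) - ((k:ℝ)+1))^2)
      + (2/(2*(m:ℝ)+1)^3) * (1/((k:ℝ)+1))
      + (2/(2*(m:ℝ)+1)^3) * (1/((2*(m:ℝ)+1) - ((k:ℝ)+1))) := by
    intro k hk
    rw [Finset.mem_range] at hk
    rw [G1_abs_lo m k hk]
    have hk1 : ((k:ℝ)+1) ≠ 0 := by positivity
    have hk2 : ((2*(m:ℝ)+1) - ((k:ℝ)+1)) ≠ 0 := by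
      have : (k:ℝ)+1 ≤ 2*(m:ℝ) := by exact_mod_cast hk
      nlinarith
    have hk3 : (2*(m:ℝ)+1) ≠ 0 := by positivity
    exact pf_identity (2*(m:ℝ)+1) ((k:ℝ)+1) hk1 hk2 hk3
  rw [Finset.sum_congr rfl hpoint]
  simp only [Finset.sum_add_distrib, ← Finset.mul_sum]
  rw [reflect2 m 2, reflect1 m]



lemma G1_nonneg (m k : ℕ) : 0 ≤ G1 m k := by unfold G1; positivity
lemma G2_nonneg (m k : ℕ) : 0 ≤ G2 m k := by unfold G2; positivity

lemma reduce (m : ℕ) (A B : ℝ)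
    (h1 : Summable (G1 m)) (h2 : Summable (G2 m))
    (b1 : ∑' k, G1 m k ≤ A) (b2 : ∑' k, G2 m k ≤ B) :
    (∑' l : {l : ℤ // l ≠ (m:ℤ)},
      1 / ((1 + |(l : ℝ) + ((m:ℤ):ℝ)|)^2 * |((m:ℤ) : ℝ) - (l:ℝ)|^2)) ≤ A + B := by
  have hA : 0 ≤ A := le_trans (tsum_nonneg (G1_nonneg m)) b1
  have hB : 0 ≤ B := le_trans (tsum_nonneg (G2_nonneg m)) b2
  apply tsum_le_of_sum_le' (by linarith)
  intro s
  classical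
  rw [← Finset.sum_filter_add_sum_filter_not s (fun x : {l : ℤ // l ≠ (m:ℤ)} => (x:ℤ) < (m:ℤ))]
  have key1 : ∑ x ∈ s.filter (fun x : {l : ℤ // l ≠ (m:ℤ)} => (x:ℤ) < (m:ℤ)),
      (1 / ((1 + |(x : ℝ) + ((m:ℤ):ℝ)|)^2 * |((m:ℤ) : ℝ) - (x:ℝ)|^2)) ≤ A := by
    refine le_trans ?_ b1
    set t := s.filter (fun x : {l : ℤ // l ≠ (m:ℤ)} => (x:ℤ) < (m:ℤ)) with ht
    have hinj : ∀ x ∈ t, ∀ y ∈ t,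
        ((m:ℤ) - 1 - (x:ℤ)).toNat = ((m:ℤ) - 1 - (y:ℤ)).toNat → x = y := by
      intro x hx y hy h
      rw [ht, Finset.mem_filter] at hx hy
      exact Subtype.ext (by omega)
    have himg := Finset.sum_image (f := G1 m)
      (g := fun x : {l : ℤ // l ≠ (m:ℤ)} => ((m:ℤ) - 1 - (x:ℤ)).toNat) (s := t) hinj
    have hterm : ∀ x ∈ t, G1 m (((m:ℤ) - 1 - (x:ℤ)).toNat)
        = 1 / ((1 + |(x : ℝ) + ((m:ℤ):ℝ)|)^2 * |((m:ℤ) : ℝ) - (x:ℝ)|^2) := by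
      intro x hx
      rw [ht, Finset.mem_filter] at hx
      have hxm : (x:ℤ) < (m:ℤ) := hx.2
      have hcast : ((((m:ℤ) - 1 - (x:ℤ)).toNat : ℕ) : ℝ) = (m:ℝ) - 1 - ((x:ℤ):ℝ) := by
        have := Int.toNat_of_nonneg (a := (m:ℤ) - 1 - (x:ℤ)) (by omega)
        have := congrArg (fun z : ℤ => (z:ℝ)) this
        push_cast at this ⊢
        linarith
      unfold G1
      rw [hcast]
      push_cast
      have e1 : 2*(m:ℝ) - (((m:ℝ) - 1 - ((x:ℤ):ℝ)) + 1) = ((x:ℤ):ℝ) + (m:ℝ) := by ring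
      have e2 : (((m:ℝ) - 1 - ((x:ℤ):ℝ)) + 1)^2 = ((m:ℝ) - ((x:ℤ):ℝ))^2 := by ring
      rw [e1, e2, ← sq_abs ((m:ℝ) - ((x:ℤ):ℝ))]
    calc ∑ x ∈ t, (1 / ((1 + |(x : ℝ) + ((m:ℤ):ℝ)|)^2 * |((m:ℤ) : ℝ) - (x:ℝ)|^2))
        = ∑ x ∈ t, G1 m (((m:ℤ) - 1 - (x:ℤ)).toNat) := by
          exact (Finset.sum_congr rfl hterm).symm
      _ = ∑ k ∈ t.image (fun x : {l : ℤ // l ≠ (m:ℤ)} => ((m:ℤ) - 1 - (x:ℤ)).toNat), G1 m k :=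
          himg.symm
      _ ≤ ∑' k, G1 m k := Summable.sum_le_tsum _ (fun i _ => G1_nonneg m i) h1
  have key2 : ∑ x ∈ s.filter (fun x : {l : ℤ // l ≠ (m:ℤ)} => ¬ (x:ℤ) < (m:ℤ)),
      (1 / ((1 + |(x : ℝ) + ((m:ℤ):ℝ)|)^2 * |((m:ℤ) : ℝ) - (x:ℝ)|^2)) ≤ B := by
    refine le_trans ?_ b2
    set t := s.filter (fun x : {l : ℤ // l ≠ (m:ℤ)} => ¬ (x:ℤ) < (m:ℤ)) with ht
    have hinj : ∀ x ∈ t, ∀ y ∈ t,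
        ((x:ℤ) - (m:ℤ) - 1).toNat = ((y:ℤ) - (m:ℤ) - 1).toNat → x = y := by
      intro x hx y hy h
      rw [ht, Finset.mem_filter] at hx hy
      have hx2 := x.2; have hy2 := y.2
      exact Subtype.ext (by omega)
    have himg := Finset.sum_image (f := G2 m)
      (g := fun x : {l : ℤ // l ≠ (m:ℤ)} => ((x:ℤ) - (m:ℤ) - 1).toNat) (s := t) hinj
    have hterm : ∀ x ∈ t, G2 m (((x:ℤ) - (m:ℤ) - 1).toNat)
        = 1 / ((1 + |(x : ℝ) + ((m:ℤ):ℝ)|)^2 * |((m:ℤ) : ℝ) - (x:ℝ)|^2) := by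
      intro x hx
      rw [ht, Finset.mem_filter] at hx
      have hx2 := x.2
      have hxm : (m:ℤ) < (x:ℤ) := by omega
      have hcast : (((((x:ℤ) - (m:ℤ) - 1)).toNat : ℕ) : ℝ) = ((x:ℤ):ℝ) - (m:ℝ) - 1 := by
        have := Int.toNat_of_nonneg (a := (x:ℤ) - (m:ℤ) - 1) (by omega)
        have := congrArg (fun z : ℤ => (z:ℝ)) this
        push_cast at this ⊢
        linarith
      have hxR : (m:ℝ) + 1 ≤ ((x:ℤ):ℝ) := by exact_mod_cast hxm
      have hmR : (0:ℝ) ≤ (m:ℝ) := Nat.cast_nonneg m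
      unfold G2
      rw [hcast]
      push_cast
      have e1 : 2*(m:ℝ) + ((((x:ℤ):ℝ) - (m:ℝ) - 1) + 1) = ((x:ℤ):ℝ) + (m:ℝ) := by ring
      have e2 : ((((x:ℤ):ℝ) - (m:ℝ) - 1) + 1)^2 = ((m:ℝ) - ((x:ℤ):ℝ))^2 := by ring
      rw [e1, e2, ← sq_abs ((m:ℝ) - ((x:ℤ):ℝ))]
      rw [abs_of_pos (a := ((x:ℤ):ℝ) + (m:ℝ)) (by linarith)]
    calc ∑ x ∈ t, (1 / ((1 + |(x : ℝ) + ((m:ℤ):ℝ)|)^2 * |((m:ℤ) : ℝ) - (x:ℝ)|^2))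
        = ∑ x ∈ t, G2 m (((x:ℤ) - (m:ℤ) - 1).toNat) := (Finset.sum_congr rfl hterm).symm
      _ = ∑ k ∈ t.image (fun x : {l : ℤ // l ≠ (m:ℤ)} => ((x:ℤ) - (m:ℤ) - 1).toNat), G2 m k :=
          himg.symm
      _ ≤ ∑' k, G2 m k := Summable.sum_le_tsum _ (fun i _ => G2_nonneg m i) h2
  exact add_le_add key1 key2


lemma tail_helper {D v w : ℝ} (hv : 0 < v) (hD : 0 < D) (h : D ≤ w) :
    1/(v^2*w^2) ≤ (1/D^2)/v^2 := by
  rw [div_div]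
  apply one_div_le_one_div_of_le (by positivity)
  have hw : 0 < w := lt_of_lt_of_le hD h
  nlinarith [mul_nonneg (mul_nonneg (sq_nonneg v) (sub_nonneg.2 h))
    (show (0:ℝ) ≤ w + D by linarith)]

lemma tail_helper' {D v w : ℝ} (hv : 0 < v) (hD : 0 < D) (h : D ≤ w) :
    1/(w^2*v^2) ≤ (1/D^2)/v^2 := by
  rw [mul_comm]; exact tail_helper hv hD h

lemma final_ineq (Z N s A2 B2 : ℝ) (hZ1 : 1 ≤ Z) (hZ : Z ≤ 1.6449418)
    (hN : 7 ≤ N) (hs2 : s^2 = N) (hsge : 2.645 ≤ s)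
    (hA0 : 0 ≤ A2) (hA : A2 ≤ Z) (hB0 : 0 ≤ B2) (hB : B2 ≤ s) :
    (1/N^2)*A2 + (1/N^2)*A2 + (2/N^3)*B2 + (2/N^3)*B2 + (1/N^2)*(Z-1) + (1/N^2)*Z
      ≤ (5/2)/((N+1)/2)^2 := by
  subst hs2
  have hs0 : (0:ℝ) < s := by linarith
  have hE : (1/(s^2)^2)*A2 + (1/(s^2)^2)*A2 + (2/(s^2)^3)*B2 + (2/(s^2)^3)*B2
      + (1/(s^2)^2)*(Z-1) + (1/(s^2)^2)*Z
      = (2*A2 + 2*Z - 1)/(s^2)^2 + (4*B2)/(s^2)^3 := by ring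
  rw [hE]
  have h1 : (2*A2 + 2*Z - 1)/(s^2)^2 ≤ (4*Z-1)/(s^2)^2 := by
    rw [div_le_div_iff₀ (by positivity) (by positivity)]
    nlinarith [mul_le_mul_of_nonneg_right (show 2*A2+2*Z-1 ≤ 4*Z-1 by linarith)
      (show (0:ℝ) ≤ (s^2)^2 by positivity)]
  have h2 : (4*B2)/(s^2)^3 ≤ (4*s)/(s^2)^3 := by
    rw [div_le_div_iff₀ (by positivity) (by positivity)]
    nlinarith [mul_le_mul_of_nonneg_right (show 4*B2 ≤ 4*s by linarith)
      (show (0:ℝ) ≤ (s^2)^3 by positivity)]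
  have e2 : (4*Z-1)/(s^2)^2 + (4*s)/(s^2)^3 = ((4*Z-1)*s^2 + 4*s)/(s^2)^3 := by
    field_simp
  have e3 : (5:ℝ)/2/((s^2+1)/2)^2 = 10/(s^2+1)^2 := by
    rw [div_pow, div_div_eq_mul_div]
    norm_num
  have h3 : ((4*Z-1)*s^2 + 4*s)/(s^2)^3 ≤ 10/(s^2+1)^2 := by
    rw [div_le_div_iff₀ (by positivity) (by positivity)]
    have c1 : (0:ℝ) ≤ (s-2.645)*s := mul_nonneg (by linarith) hs0.le
    have c2 : (0:ℝ) ≤ (s-2.645)*s^2 := mul_nonneg (by linarith) (by positivity)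
    have c3 : (0:ℝ) ≤ (s-2.645)*s^3 := mul_nonneg (by linarith) (by positivity)
    have c4 : (0:ℝ) ≤ (s-2.645)*s^4 := mul_nonneg (by linarith) (by positivity)
    have c5 : (0:ℝ) ≤ (s-2.645)*s^5 := mul_nonneg (by linarith) (by positivity)
    have pz : (0:ℝ) ≤ (1.6449418 - Z)*(s^2*(s^2+1)^2) :=
      mul_nonneg (by linarith) (by positivity)
    nlinarith [c1, c2, c3, c4, c5, pz]
  rw [e3]
  calc (2*A2 + 2*Z - 1)/(s^2)^2 + (4*B2)/(s^2)^3
      ≤ (4*Z-1)/(s^2)^2 + (4*s)/(s^2)^3 := by linarith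
    _ = ((4*Z-1)*s^2 + 4*s)/(s^2)^3 := e2
    _ ≤ 10/(s^2+1)^2 := h3

lemma key_s1 (m : ℕ) :
    (∑' l : {l : ℤ // l ≠ (m:ℤ)},
      1 / ((1 + |(l : ℝ) + ((m:ℤ):ℝ)|)^2 * |((m:ℤ) : ℝ) - (l:ℝ)|^2)) ≤ (5/2)/(1+(m:ℝ))^2 := by
  have hpi := Real.pi_lt_d4
  have hpi3 := Real.pi_gt_three
  have hZ : π^2/6 ≤ 1.6449418 := by nlinarith
  have hZ0 : (1:ℝ) ≤ π^2/6 := by nlinarith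
  rcases Nat.lt_or_ge m 3 with hm | hm
  · interval_cases m
    · -- m = 0
      have H1 := aux_bound (G1 0) 0 0 (1/4) (by norm_num) (G1_nonneg 0) (by
        intro k
        have hk0 : (0:ℝ) ≤ (k:ℝ) := Nat.cast_nonneg k
        rw [G1_abs_hi 0 (k+0) (by omega)]
        push_cast
        rw [show ((k:ℝ)+0+1-2*0+1) = (k:ℝ)+2 by ring]
        rw [show ((k:ℝ)+0+1) = (k:ℝ)+1 by ring]
        rw [div_le_div_iff₀ (by positivity) (by positivity)]
        nlinarith [mul_nonneg (mul_nonneg (sq_nonneg ((k:ℝ)+1)) hk0)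
          (show (0:ℝ) ≤ (k:ℝ)+4 by linarith)])
      have H2 := aux_bound (G2 0) 0 0 (1/4) (by norm_num) (G2_nonneg 0) (by
        intro k
        have hk0 : (0:ℝ) ≤ (k:ℝ) := Nat.cast_nonneg k
        rw [G2_eq 0 (k+0)]
        push_cast
        rw [show (2*(0:ℝ)+1+((k:ℝ)+0+1)) = (k:ℝ)+2 by ring]
        rw [show ((k:ℝ)+0+1) = (k:ℝ)+1 by ring]
        rw [div_le_div_iff₀ (by positivity) (by positivity)]
        nlinarith [mul_nonneg (mul_nonneg (sq_nonneg ((k:ℝ)+1)) hk0)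
          (show (0:ℝ) ≤ (k:ℝ)+4 by linarith)])
      refine le_trans (reduce 0 _ _ H1.1 H2.1 H1.2 H2.2) ?_
      simp only [Finset.sum_range_zero, Finset.range_zero, Finset.sum_empty]
      push_cast
      nlinarith
    · -- m = 1
      have H1 := aux_bound (G1 1) 7 7 (1/49) (by norm_num) (G1_nonneg 1) (by
        intro k
        have hk0 : (0:ℝ) ≤ (k:ℝ) := Nat.cast_nonneg k
        rw [G1_abs_hi 1 (k+7) (by omega)]
        push_cast
        rw [show ((k:ℝ)+7+1-2*1+1) = (k:ℝ)+7 by ring]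
        rw [show ((k:ℝ)+7+1) = (k:ℝ)+8 by ring]
        rw [div_le_div_iff₀ (by positivity) (by positivity)]
        nlinarith [mul_nonneg (mul_nonneg (sq_nonneg ((k:ℝ)+8)) hk0)
          (show (0:ℝ) ≤ (k:ℝ)+14 by linarith)])
      have H2 := aux_bound (G2 1) 4 4 (1/64) (by norm_num) (G2_nonneg 1) (by
        intro k
        have hk0 : (0:ℝ) ≤ (k:ℝ) := Nat.cast_nonneg k
        rw [G2_eq 1 (k+4)]
        push_cast
        rw [show (2*(1:ℝ)+1+((k:ℝ)+4+1)) = (k:ℝ)+8 by ring]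
        rw [show ((k:ℝ)+4+1) = (k:ℝ)+5 by ring]
        rw [div_le_div_iff₀ (by positivity) (by positivity)]
        nlinarith [mul_nonneg (mul_nonneg (sq_nonneg ((k:ℝ)+5)) hk0)
          (show (0:ℝ) ≤ (k:ℝ)+16 by linarith)])
      refine le_trans (reduce 1 _ _ H1.1 H2.1 H1.2 H2.2) ?_
      have e1 : ∑ i ∈ Finset.range 7, G1 1 i = 1/4+1/4+1/36+1/144+1/400+1/900+1/1764 := by
        simp only [Finset.sum_range_succ, Finset.sum_range_zero, G1]
        norm_num [abs_of_nonneg, abs_of_nonpos]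
      have e2 : ∑ i ∈ Finset.range 4, G2 1 i = 1/16+1/100+1/324+1/784 := by
        simp only [Finset.sum_range_succ, Finset.sum_range_zero, G2]
        norm_num
      have e3 : ∑ i ∈ Finset.range 7, 1/((i:ℝ)+1)^2 = 1+1/4+1/9+1/16+1/25+1/36+1/49 := by
        simp only [Finset.sum_range_succ, Finset.sum_range_zero]
        norm_num
      have e4 : ∑ i ∈ Finset.range 4, 1/((i:ℝ)+1)^2 = 1+1/4+1/9+1/16 := by
        simp only [Finset.sum_range_succ, Finset.sum_range_zero]
        norm_num
      rw [e1, e2, e3, e4]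
      push_cast
      nlinarith
    · -- m = 2
      have H1 := aux_bound (G1 2) 5 5 (1/9) (by norm_num) (G1_nonneg 2) (by
        intro k
        have hk0 : (0:ℝ) ≤ (k:ℝ) := Nat.cast_nonneg k
        rw [G1_abs_hi 2 (k+5) (by omega)]
        push_cast
        rw [show ((k:ℝ)+5+1-2*2+1) = (k:ℝ)+3 by ring]
        rw [show ((k:ℝ)+5+1) = (k:ℝ)+6 by ring]
        rw [div_le_div_iff₀ (by positivity) (by positivity)]
        nlinarith [mul_nonneg (mul_nonneg (sq_nonneg ((k:ℝ)+6)) hk0)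
          (show (0:ℝ) ≤ (k:ℝ)+6 by linarith)])
      have H2 := aux_bound (G2 2) 0 0 (1/36) (by norm_num) (G2_nonneg 2) (by
        intro k
        have hk0 : (0:ℝ) ≤ (k:ℝ) := Nat.cast_nonneg k
        rw [G2_eq 2 (k+0)]
        push_cast
        rw [show (2*(2:ℝ)+1+((k:ℝ)+0+1)) = (k:ℝ)+6 by ring]
        rw [show ((k:ℝ)+0+1) = (k:ℝ)+1 by ring]
        rw [div_le_div_iff₀ (by positivity) (by positivity)]
        nlinarith [mul_nonneg (mul_nonneg (sq_nonneg ((k:ℝ)+1)) hk0)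
          (show (0:ℝ) ≤ (k:ℝ)+12 by linarith)])
      refine le_trans (reduce 2 _ _ H1.1 H2.1 H1.2 H2.2) ?_
      have e1 : ∑ i ∈ Finset.range 5, G1 2 i = 1/16+1/36+1/36+1/16+1/100 := by
        simp only [Finset.sum_range_succ, Finset.sum_range_zero, G1]
        norm_num [abs_of_nonneg, abs_of_nonpos]
      have e3 : ∑ i ∈ Finset.range 5, 1/((i:ℝ)+1)^2 = 1+1/4+1/9+1/16+1/25 := by
        simp only [Finset.sum_range_succ, Finset.sum_range_zero]
        norm_num
      rw [e1, e3]
      simp only [Finset.sum_range_zero, Finset.range_zero, Finset.sum_empty]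
      push_cast
      nlinarith
  · -- main case : 3 ≤ m
    have hmR : (3:ℝ) ≤ (m:ℝ) := by exact_mod_cast hm
    have hN7 : (7:ℝ) ≤ 2*(m:ℝ)+1 := by linarith
    have hNpos : (0:ℝ) < 2*(m:ℝ)+1 := by linarith
    have H1 := aux_bound (G1 m) (2*m) 1 (1/(2*(m:ℝ)+1)^2) (by positivity) (G1_nonneg m) (by
      intro k
      have hk0 : (0:ℝ) ≤ (k:ℝ) := Nat.cast_nonneg k
      rw [G1_abs_hi m (k+2*m) (by omega)]
      push_cast
      rw [show ((k:ℝ)+2*(m:ℝ)+1-2*(m:ℝ)+1) = (k:ℝ)+2 by ring]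
      rw [show ((k:ℝ)+1+1) = (k:ℝ)+2 by ring]
      exact tail_helper (by positivity) (by positivity) (by linarith))
    have H2 := aux_bound (G2 m) 0 0 (1/(2*(m:ℝ)+1)^2) (by positivity) (G2_nonneg m) (by
      intro k
      have hk0 : (0:ℝ) ≤ (k:ℝ) := Nat.cast_nonneg k
      rw [G2_eq m (k+0)]
      push_cast
      rw [show ((k:ℝ)+0+1) = (k:ℝ)+1 by ring]
      exact tail_helper' (by positivity) (by positivity) (by linarith))
    refine le_trans (reduce m _ _ H1.1 H2.1 H1.2 H2.2) ?_
    have hhead := head_eq m (by omega)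
    set A2 : ℝ := ∑ k ∈ Finset.range (2*m), 1/((k:ℝ)+1)^2 with hA2
    set B2 : ℝ := ∑ k ∈ Finset.range (2*m), 1/((k:ℝ)+1) with hB2
    have hA2le : A2 ≤ π^2/6 := partial_le (2*m)
    have hA2pos : 0 ≤ A2 := Finset.sum_nonneg (fun i _ => by positivity)
    have hB2pos : 0 ≤ B2 := Finset.sum_nonneg (fun i _ => by positivity)
    have hB2le : B2 ≤ Real.sqrt (2*(m:ℝ)+1) := by
      have h := harmonic_sqrt (2*m) (by omega)
      have hcst : ((2*m:ℕ):ℝ)+1 = 2*(m:ℝ)+1 := by push_cast; ring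
      rwa [hcst] at h
    have hs2 : (Real.sqrt (2*(m:ℝ)+1))^2 = 2*(m:ℝ)+1 := Real.sq_sqrt (by positivity)
    have hsge : (2.645:ℝ) ≤ Real.sqrt (2*(m:ℝ)+1) := by
      rw [show (2.645:ℝ) = Real.sqrt (2.645^2) by rw [Real.sqrt_sq (by norm_num)]]
      apply Real.sqrt_le_sqrt
      have : (2.645:ℝ)^2 = 6.996025 := by norm_num
      linarith
    have hP1 : ∑ i ∈ Finset.range 1, 1/((i:ℝ)+1)^2 = 1 := by norm_num
    rw [hhead, hP1]
    simp only [Finset.sum_range_zero, Finset.range_zero, Finset.sum_empty, zero_add, sub_zero]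
    rw [show 1+(m:ℝ) = ((2*(m:ℝ)+1)+1)/2 by ring]
    exact final_ineq (π^2/6) (2*(m:ℝ)+1) (Real.sqrt (2*(m:ℝ)+1)) A2 B2
      hZ0 hZ hN7 hs2 hsge hA2pos hA2le hB2pos hB2le

lemma sym' (m : ℕ) :
    (∑' l : {l : ℤ // l ≠ -(m:ℤ)},
      1 / ((1 + |(l : ℝ) + ((-(m:ℤ)):ℝ)|)^2 * |((-(m:ℤ)) : ℝ) - (l:ℝ)|^2))
    = (∑' l : {l : ℤ // l ≠ (m:ℤ)},
      1 / ((1 + |(l : ℝ) + ((m:ℤ):ℝ)|)^2 * |((m:ℤ) : ℝ) - (l:ℝ)|^2)) := by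
  let e : {l : ℤ // l ≠ (m:ℤ)} ≃ {l : ℤ // l ≠ -(m:ℤ)} :=
    { toFun := fun x => ⟨-x.1, by have := x.2; omega⟩
      invFun := fun x => ⟨-x.1, by have := x.2; omega⟩
      left_inv := fun x => by simp
      right_inv := fun x => by simp }
  rw [← Equiv.tsum_eq e (fun l : {l : ℤ // l ≠ -(m:ℤ)} =>
    1 / ((1 + |(l : ℝ) + ((-(m:ℤ)):ℝ)|)^2 * |((-(m:ℤ)) : ℝ) - (l:ℝ)|^2))]
  apply tsum_congr
  intro x
  have hval : ((e x : ℤ) : ℝ) = -((x : ℤ) : ℝ) := by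
    show ((-(x:ℤ) : ℤ) : ℝ) = -((x : ℤ) : ℝ)
    push_cast
    ring
  rw [hval]
  rw [show -((x:ℤ):ℝ) + -(((m:ℕ):ℤ):ℝ) = -(((x:ℤ):ℝ) + (((m:ℕ):ℤ):ℝ)) by ring, abs_neg,
      show -(((m:ℕ):ℤ):ℝ) - -((x:ℤ):ℝ) = -((((m:ℕ):ℤ):ℝ) - ((x:ℤ):ℝ)) by ring, abs_neg]

theorem stmt_1 (n : ℤ) :
    (∑' l : {l : ℤ // l ≠ n},
      1 / ((1 + |(l : ℝ) + n|)^2 * |(n : ℝ) - l|^2))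
    ≤ (5 / 2) / (1 + |(n : ℝ)|)^2 := by
  rcases Int.eq_nat_or_neg n with ⟨m, hm | hm⟩
  · subst hm
    have h := key_s1 m
    rw [show |(((m:ℕ):ℤ):ℝ)| = ((m:ℕ):ℝ) by push_cast; exact abs_of_nonneg (Nat.cast_nonneg m)]
    convert h using 2
  · subst hm
    have h := key_s1 m
    rw [← sym' m] at h
    have e2 : (5:ℝ)/2/(1+|(((-(m:ℕ)):ℤ):ℝ)|)^2 = (5:ℝ)/2/(1+((m:ℕ):ℝ))^2 := by
      push_cast
      rw [abs_neg, abs_of_nonneg (Nat.cast_nonneg m)]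
    rw [e2]
    refine le_trans (le_of_eq (tsum_congr fun x => ?_)) h
    push_cast
    ring_nf
end

section
/- Let (f_m)_{m∈ℤ} be a square-summable complex sequence with finite weighted norm ‖f‖² = ∑ w_m²|f_m|² for a weight w_m ≥ 1, and let n be an integer. Define g_m = f_m/(λ − mπ) for m ≠ n and g_n = 0, where λ is a complex number with |Re λ − nπ| ≤ π/2. Then ∑_{m≠n} w_m|g_m| ≤ 2·(∑_m w_m²|f_m|²)^{1/2}. -/
open Real

lemma cs_tsum {α : Type*} (a b : α → ℝ) (ha : ∀ i, 0 ≤ a i) (hb : ∀ i, 0 ≤ b i)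
    (hA : Summable (fun i => a i ^ 2)) (hB : Summable (fun i => b i ^ 2)) :
    ∑' i, a i * b i ≤ Real.sqrt (∑' i, a i ^ 2) * Real.sqrt (∑' i, b i ^ 2) := by
  have hab : Summable (fun i => a i * b i) := by
    refine Summable.of_nonneg_of_le (fun i => mul_nonneg (ha i) (hb i)) (fun i => ?_)
      ((hA.add hB).div_const 2)
    nlinarith [sq_nonneg (a i - b i)]
  refine Summable.tsum_le_of_sum_le hab (fun s => ?_)
  calc ∑ i ∈ s, a i * b i
      ≤ Real.sqrt (∑ i ∈ s, a i ^ 2) * Real.sqrt (∑ i ∈ s, b i ^ 2) :=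
        Real.sum_mul_le_sqrt_mul_sqrt s a b
    _ ≤ Real.sqrt (∑' i, a i ^ 2) * Real.sqrt (∑' i, b i ^ 2) :=
        mul_le_mul (Real.sqrt_le_sqrt (Summable.sum_le_tsum s (fun i _ => sq_nonneg _) hA))
          (Real.sqrt_le_sqrt (Summable.sum_le_tsum s (fun i _ => sq_nonneg _) hB))
          (Real.sqrt_nonneg _) (Real.sqrt_nonneg _)

lemma hasSum_int_inv_sq : HasSum (fun k : ℤ => 1 / (k : ℝ) ^ 2) (π ^ 2 / 3) := by
  have h1 : HasSum (fun n : ℕ => (1 : ℝ) / (n : ℝ) ^ 2) (π ^ 2 / 6) := hasSum_zeta_two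
  have h2 : HasSum (fun n : ℕ => 1 / ((-((n : ℕ) + 1) : ℤ) : ℝ) ^ 2) (π ^ 2 / 6) := by
    have h3 : HasSum (fun n : ℕ => (1 : ℝ) / ((n + 1 : ℕ) : ℝ) ^ 2) (π ^ 2 / 6) := by
      refine (hasSum_nat_add_iff (f := fun n : ℕ => (1 : ℝ) / (n : ℝ) ^ 2) 1).mpr ?_
      simpa using h1
    refine h3.congr_fun fun n => ?_
    push_cast
    ring_nf
  have := HasSum.of_nat_of_neg_add_one (f := fun k : ℤ => 1 / (k : ℝ) ^ 2)
    (h1.congr_fun fun k => by push_cast; ring_nf)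
    (h2.congr_fun fun k => by push_cast; ring_nf)
  convert this using 1
  ring

theorem stmt_9 (w : ℤ → ℝ) (f : ℤ → ℂ) (n : ℤ) (lam : ℂ)
    (hw : ∀ m, 1 ≤ w m)
    (hf : Summable (fun m : ℤ => w m ^ 2 * ‖f m‖ ^ 2))
    (hlam : |lam.re - n * Real.pi| ≤ Real.pi / 2)
    (g : ℤ → ℂ)
    (hg : ∀ m, m ≠ n → g m = f m / (lam - m * Real.pi))
    (hgn : g n = 0) :
    (∑' m : {m : ℤ // m ≠ n}, w m * ‖g m‖)
      ≤ 2 * Real.sqrt (∑' m : ℤ, w m ^ 2 * ‖f m‖ ^ 2) := by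
  have hpi : (3 : ℝ) < π := Real.pi_gt_three
  -- the key pointwise bound on the denominator
  have key : ∀ m : ℤ, m ≠ n → |(n : ℝ) - m| ≤ ‖lam - m * Real.pi‖ := by
    intro m hm
    have hd1 : (1 : ℝ) ≤ |(n : ℝ) - m| := by
      have h1 : (1 : ℤ) ≤ |n - m| := Int.one_le_abs (by omega)
      calc (1 : ℝ) ≤ ((|n - m| : ℤ) : ℝ) := by exact_mod_cast h1
        _ = |(n : ℝ) - m| := by rw [Int.cast_abs]; push_cast; ring_nf
    set d := |(n : ℝ) - m| with hdd
    have htri : d * π ≤ |lam.re - n * π| + |lam.re - m * π| := by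
      have hdpi : d * π = |(n * π : ℝ) - m * π| := by
        rw [← sub_mul, abs_mul, abs_of_pos (by linarith : (0:ℝ) < π)]
      rw [hdpi]
      calc |(n * π : ℝ) - m * π| = |-(lam.re - n * π) + (lam.re - m * π)| := by ring_nf
        _ ≤ |-(lam.re - n * π)| + |lam.re - m * π| := abs_add_le _ _
        _ = |lam.re - n * π| + |lam.re - m * π| := by rw [abs_neg]
    have hre : d ≤ |lam.re - m * π| := by nlinarith [abs_nonneg (lam.re - n * π)]
    have hre2 : (lam - m * (Real.pi : ℂ)).re = lam.re - m * π := by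
      simp [Complex.sub_re, Complex.mul_re]
    calc d ≤ |lam.re - m * π| := hre
      _ = |(lam - m * (Real.pi : ℂ)).re| := by rw [hre2]
      _ ≤ ‖lam - m * (Real.pi : ℂ)‖ := Complex.abs_re_le_norm _
  -- sequences on the subtype
  have ha0 : ∀ i : {m : ℤ // m ≠ n}, 0 ≤ w i * ‖f (i : ℤ)‖ :=
    fun i => mul_nonneg (le_trans zero_le_one (hw i)) (norm_nonneg _)
  have hA : Summable (fun i : {m : ℤ // m ≠ n} => (w i * ‖f (i : ℤ)‖) ^ 2) := by
    have h := hf.subtype {m : ℤ | m ≠ n}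
    refine h.congr fun i => ?_
    simp [mul_pow]
  -- sum of 1/(n-m)^2 over ℤ
  have hH : HasSum (fun m : ℤ => 1 / ((n : ℝ) - m) ^ 2) (π ^ 2 / 3) := by
    have he := (Equiv.subLeft n).hasSum_iff
      (f := fun m : ℤ => 1 / ((n : ℝ) - m) ^ 2) (a := π ^ 2 / 3)
    rw [← he]
    refine hasSum_int_inv_sq.congr_fun fun k => ?_
    simp only [Equiv.subLeft_apply, Function.comp_apply]
    push_cast
    ring_nf
  have hB : Summable (fun i : {m : ℤ // m ≠ n} => (1 / |(n : ℝ) - i|) ^ 2) := by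
    have h := hH.summable.subtype {m : ℤ | m ≠ n}
    refine h.congr fun i => ?_
    simp [div_pow, sq_abs]
  have hBle : ∑' i : {m : ℤ // m ≠ n}, (1 / |(n : ℝ) - i|) ^ 2 ≤ 4 := by
    have h1 : ∑' i : {m : ℤ // m ≠ n}, (1 / |(n : ℝ) - i|) ^ 2
        = ∑' i : ({m : ℤ | m ≠ n} : Set ℤ), (fun m : ℤ => 1 / ((n : ℝ) - m) ^ 2) i := by
      refine tsum_congr fun i => ?_
      rw [div_pow, one_pow, sq_abs]
    rw [h1]
    have h2 := Summable.tsum_subtype_le (fun m : ℤ => 1 / ((n : ℝ) - m) ^ 2) {m : ℤ | m ≠ n}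
      (fun m => by positivity) hH.summable
    rw [hH.tsum_eq] at h2
    refine h2.trans ?_
    nlinarith [Real.pi_lt_d2]
  -- pointwise term bound
  have hterm : ∀ i : {m : ℤ // m ≠ n},
      w i * ‖g (i : ℤ)‖ ≤ (w i * ‖f (i : ℤ)‖) * (1 / |(n : ℝ) - i|) := by
    rintro ⟨m, hm⟩
    simp only
    rw [hg m hm, norm_div]
    have hd1 : (1 : ℝ) ≤ |(n : ℝ) - m| := by
      have h1 : (1 : ℤ) ≤ |n - m| := Int.one_le_abs (by omega)
      calc (1 : ℝ) ≤ ((|n - m| : ℤ) : ℝ) := by exact_mod_cast h1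
        _ = |(n : ℝ) - m| := by rw [Int.cast_abs]; push_cast; ring_nf
    have hk := key m hm
    have hnorm_pos : (0 : ℝ) < ‖lam - m * (Real.pi : ℂ)‖ := lt_of_lt_of_le (by linarith) hk
    have heq : w m * ‖f m‖ * (1 / |(n : ℝ) - m|) = w m * (‖f m‖ / |(n : ℝ) - m|) := by
      ring
    rw [heq]
    exact mul_le_mul_of_nonneg_left
      (div_le_div_of_nonneg_left (norm_nonneg _) (by linarith) hk)
      (le_trans zero_le_one (hw m))
  -- assemble everything
  have hab : Summable (fun i : {m : ℤ // m ≠ n} =>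
      (w i * ‖f (i : ℤ)‖) * (1 / |(n : ℝ) - i|)) := by
    refine Summable.of_nonneg_of_le
      (fun i => mul_nonneg (ha0 i) (by positivity)) (fun i => ?_)
      ((hA.add hB).div_const 2)
    nlinarith [sq_nonneg (w i * ‖f (i : ℤ)‖ - 1 / |(n : ℝ) - i|), ha0 i,
      abs_nonneg ((n : ℝ) - i)]
  have ht : Summable (fun i : {m : ℤ // m ≠ n} => w i * ‖g (i : ℤ)‖) :=
    Summable.of_nonneg_of_le
      (fun i => mul_nonneg (le_trans zero_le_one (hw i)) (norm_nonneg _)) hterm hab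
  have hAle : ∑' i : {m : ℤ // m ≠ n}, (w i * ‖f (i : ℤ)‖) ^ 2
      ≤ ∑' m : ℤ, w m ^ 2 * ‖f m‖ ^ 2 := by
    have h1 : ∑' i : {m : ℤ // m ≠ n}, (w i * ‖f (i : ℤ)‖) ^ 2
        = ∑' i : ({m : ℤ | m ≠ n} : Set ℤ), (fun m : ℤ => w m ^ 2 * ‖f m‖ ^ 2) i := by
      refine tsum_congr fun i => ?_
      rw [mul_pow]
    rw [h1]
    exact Summable.tsum_subtype_le (fun m : ℤ => w m ^ 2 * ‖f m‖ ^ 2) {m : ℤ | m ≠ n}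
      (fun m => by positivity) hf
  calc ∑' i : {m : ℤ // m ≠ n}, w i * ‖g (i : ℤ)‖
      ≤ ∑' i : {m : ℤ // m ≠ n}, (w i * ‖f (i : ℤ)‖) * (1 / |(n : ℝ) - i|) :=
        Summable.tsum_le_tsum hterm ht hab
    _ ≤ Real.sqrt (∑' i : {m : ℤ // m ≠ n}, (w i * ‖f (i : ℤ)‖) ^ 2)
        * Real.sqrt (∑' i : {m : ℤ // m ≠ n}, (1 / |(n : ℝ) - i|) ^ 2) :=
        cs_tsum _ _ ha0 (fun i => by positivity) hA hB
    _ ≤ Real.sqrt (∑' m : ℤ, w m ^ 2 * ‖f m‖ ^ 2) * 2 := by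
        refine mul_le_mul (Real.sqrt_le_sqrt hAle) ?_ (Real.sqrt_nonneg _)
          (Real.sqrt_nonneg _)
        calc Real.sqrt (∑' i : {m : ℤ // m ≠ n}, (1 / |(n : ℝ) - i|) ^ 2)
            ≤ Real.sqrt 4 := Real.sqrt_le_sqrt hBle
          _ = 2 := by
              rw [show (4 : ℝ) = 2 ^ 2 by norm_num, Real.sqrt_sq (by norm_num : (0:ℝ) ≤ 2)]
    _ = 2 * Real.sqrt (∑' m : ℤ, w m ^ 2 * ‖f m‖ ^ 2) := by ring
end
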